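/- Let 𝒜 be a Frobenius abelian category and T an object of the stable category 𝒜̲ such that Hom_{𝒜̲}(T, T[n]) = 0 for all n ≠ 0 (where [1] is the shift of the triangulated structure on 𝒜̲). Then T' = i₁(T) ⊕ i₂(T) satisfies Hom(T', T'[n]) = 0 for all n ≠ 0 in the stable monomorphism category Mon̲(𝒜), and End(T') is isomorphic as an algebra to the 2×2 upper triangular matrix algebra T₂(End_{𝒜̲}(T)). -/

import Mathlib

open CategoryTheory Limits

universe v u

variable {𝒜 : Type u} [Category.{v} 𝒜] [Abelian 𝒜]

/-- The `2 × 2` upper triangular matrix ring `T₂(Λ)` over a ring `Λ`,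
realized as the subring of `2 × 2` matrices whose lower-left entry vanishes. -/
def T2 (Λ : Type*) [Ring Λ] : Subring (Matrix (Fin 2) (Fin 2) Λ) where
  carrier := {M | M 1 0 = 0}
  zero_mem' := rfl
  one_mem' := by simp [Matrix.one_apply]
  add_mem' := by intro a b ha hb; simp_all [Set.mem_setOf_eq, Matrix.add_apply]
  neg_mem' := by intro a ha; simp_all [Matrix.neg_apply]
  mul_mem' := by
    intro a b ha hb
    simp only [Set.mem_setOf_eq, Matrix.mul_apply] at *
    rw [Fin.sum_univ_two, ha, hb, zero_mul, mul_zero, add_zero]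

/-- The structure morphism (from source to target) of an object of the
morphism category `Mor(𝒜)`, realized as the functor category `Fin 2 ⥤ 𝒜`. -/
def arrowHom (F : Fin 2 ⥤ 𝒜) : F.obj 0 ⟶ F.obj 1 :=
  F.map (homOfLE (by decide))

/-- A conflation in the exact category `Mon(𝒜) ⊆ Mor(𝒜) = (Fin 2 ⥤ 𝒜)`:
all three objects are monomorphisms of `𝒜`, and the induced sequences of
sources and of targets are short exact in `𝒜`. -/
def MonConflation {α' α α'' : Fin 2 ⥤ 𝒜} (f : α' ⟶ α) (g : α ⟶ α'') : Prop :=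
  Mono (arrowHom α') ∧ Mono (arrowHom α) ∧ Mono (arrowHom α'') ∧
  ∃ (w₁ : f.app 0 ≫ g.app 0 = 0) (w₂ : f.app 1 ≫ g.app 1 = 0),
    (ShortComplex.mk (f.app 0) (g.app 0) w₁).ShortExact ∧
    (ShortComplex.mk (f.app 1) (g.app 1) w₂).ShortExact

/-- Projective objects of the exact category `Mon(𝒜)`: every conflation ending
in `β` splits. -/
def MonProjective (β : Fin 2 ⥤ 𝒜) : Prop :=
  Mono (arrowHom β) ∧ ∀ (α' α : Fin 2 ⥤ 𝒜) (f : α' ⟶ α) (g : α ⟶ β),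
    MonConflation f g → ∃ s : β ⟶ α, s ≫ g = 𝟙 β

/-- The relation on `End T` identifying endomorphisms whose difference factors
through a projective object; its `RingQuot` is the endomorphism ring of `T` in
the stable category `𝒜̲` of `𝒜` modulo projectives. -/
def stableRel (T : 𝒜) (f g : End T) : Prop :=
  ∃ (P : 𝒜) (u : T ⟶ P) (v : P ⟶ T), Projective P ∧
    f = g + (show End T from u ≫ v)

/-- The endomorphism ring of `T` in the stable category of `𝒜`. -/
def StableEnd (T : 𝒜) : Type v := RingQuot (stableRel T)

noncomputable instance (T : 𝒜) : Ring (StableEnd T) :=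
  inferInstanceAs (Ring (RingQuot (stableRel T)))

/-- The relation on `End β` (for `β` in `Mon(𝒜)`) identifying endomorphisms
whose difference factors through a projective object of `Mon(𝒜)`; its
`RingQuot` is the endomorphism ring of `β` in the stable monomorphism
category. -/
def monStableRel (β : Fin 2 ⥤ 𝒜) (f g : End β) : Prop :=
  ∃ (γ : Fin 2 ⥤ 𝒜) (u : β ⟶ γ) (v : γ ⟶ β), MonProjective γ ∧
    f = g + (show End β from u ≫ v)

/-- The endomorphism ring of `β` in the stable monomorphism category. -/
def MonStableEnd (β : Fin 2 ⥤ 𝒜) : Type _ := RingQuot (monStableRel β)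

noncomputable instance (β : Fin 2 ⥤ 𝒜) : Ring (MonStableEnd β) :=
  inferInstanceAs (Ring (RingQuot (monStableRel β)))

open CategoryTheory Limits ComposableArrows

section Lems
set_option linter.unusedSectionVars false
variable {𝒜 : Type u} [Category.{v} 𝒜] [Abelian 𝒜]

lemma natSq {F G : Fin 2 ⥤ 𝒜} (φ : F ⟶ G) :
    arrowHom F ≫ φ.app 1 = φ.app 0 ≫ arrowHom G := φ.naturality _

lemma monProjective_mk {Q R : 𝒜} (hQ : Projective Q) (hR : Projective R) :
    MonProjective (mk₁ (biprod.inr : R ⟶ Q ⊞ R) : Fin 2 ⥤ 𝒜) := by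
  constructor
  · exact (inferInstance : Mono (biprod.inr : R ⟶ Q ⊞ R))
  · intro α' α f g hc
    obtain ⟨_, _, _, w1, w2, h1, h2⟩ := hc
    haveI e0 : @Epi _ _ (α.obj 0) R (g.app 0) := h1.epi_g
    haveI e1 : @Epi _ _ (α.obj 1) (Q ⊞ R) (g.app 1) := h2.epi_g
    let s₀ : R ⟶ α.obj 0 := @Projective.factorThru _ _ R R (α.obj 0) hR (𝟙 R) (g.app 0) e0
    let t : Q ⟶ α.obj 1 := @Projective.factorThru _ _ Q (Q ⊞ R) (α.obj 1) hQ biprod.inl (g.app 1) e1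
    have hs₀ : s₀ ≫ g.app 0 = 𝟙 R := @Projective.factorThru_comp _ _ R R (α.obj 0) hR (𝟙 R) (g.app 0) e0
    have ht : t ≫ g.app 1 = biprod.inl := @Projective.factorThru_comp _ _ Q (Q ⊞ R) (α.obj 1) hQ biprod.inl (g.app 1) e1
    let s₁ : Q ⊞ R ⟶ α.obj 1 := biprod.desc t (s₀ ≫ arrowHom α)
    have w : (biprod.inr : R ⟶ Q ⊞ R) ≫ s₁ = s₀ ≫ arrowHom α := biprod.inr_desc _ _
    refine ⟨homMk₁ (F := mk₁ (biprod.inr : R ⟶ Q ⊞ R)) (G := (α : ComposableArrows 𝒜 1)) s₀ s₁ w, ?_⟩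
    apply ComposableArrows.hom_ext₁
    · exact hs₀
    · show s₁ ≫ g.app 1 = 𝟙 (Q ⊞ R)
      ext
      · exact (biprod.inl_desc_assoc _ _ _).trans (ht.trans (Category.comp_id _).symm)
      · have hn := natSq g
        show biprod.inr ≫ s₁ ≫ g.app 1 = biprod.inr ≫ 𝟙 (Q ⊞ R)
        rw [← Category.assoc, w, Category.assoc, hn, ← Category.assoc, hs₀]
        simp [arrowHom]
        exact Category.id_comp _
lemma monProjective_components [EnoughProjectives 𝒜] (β : Fin 2 ⥤ 𝒜)
    (hβ : MonProjective β) : Projective (β.obj 0) ∧ Projective (β.obj 1) := by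
  obtain ⟨hmono, hsplit⟩ := hβ
  let P₀ := Projective.over (β.obj 0)
  let P₁ := Projective.over (β.obj 1)
  let p : P₀ ⟶ β.obj 0 := Projective.π _
  let q : P₁ ⟶ β.obj 1 := Projective.π _
  let α : Fin 2 ⥤ 𝒜 := mk₁ (biprod.inl : P₀ ⟶ P₀ ⊞ P₁)
  let g1 : P₀ ⊞ P₁ ⟶ β.obj 1 := biprod.desc (p ≫ arrowHom β) q
  have wg : (biprod.inl : P₀ ⟶ P₀ ⊞ P₁) ≫ g1 = p ≫ arrowHom β := biprod.inl_desc _ _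
  let g : α ⟶ β := homMk₁ (F := (α : ComposableArrows 𝒜 1)) (G := (β : ComposableArrows 𝒜 1)) p g1 wg
  have hg0 : g.app 0 = p := rfl
  have hg1 : g.app 1 = g1 := rfl
  haveI : Epi g1 := by
    have : biprod.inr ≫ g1 = q := biprod.inr_desc _ _
    exact epi_of_epi_fac this
  haveI : Epi (g.app 0) := by rw [hg0]; exact (inferInstance : Epi p)
  haveI : Epi (g.app 1) := by rw [hg1]; exact (inferInstance : Epi g1)
  let k : kernel (g.app 0) ⟶ kernel (g.app 1) :=
    kernel.lift _ (kernel.ι (g.app 0) ≫ arrowHom α) (by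
      rw [Category.assoc, natSq g, ← Category.assoc, kernel.condition, zero_comp])
  have hk : k ≫ kernel.ι (g.app 1) = kernel.ι (g.app 0) ≫ arrowHom α := kernel.lift_ι _ _ _
  haveI : Mono k := by
    have : Mono (k ≫ kernel.ι (g.app 1)) := by
      rw [hk]
      have : Mono (arrowHom α) := (inferInstance : Mono (biprod.inl : P₀ ⟶ P₀ ⊞ P₁))
      exact mono_comp _ _
    exact mono_of_mono k (kernel.ι (g.app 1))
  let α' : Fin 2 ⥤ 𝒜 := mk₁ k
  let f : α' ⟶ α := homMk₁ (F := (α' : ComposableArrows 𝒜 1)) (G := (α : ComposableArrows 𝒜 1))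
    (kernel.ι (g.app 0)) (kernel.ι (g.app 1)) hk
  have hf0 : f.app 0 = kernel.ι (g.app 0) := rfl
  have hf1 : f.app 1 = kernel.ι (g.app 1) := rfl
  have hconf : MonConflation f g := by
    refine ⟨(inferInstance : Mono k), (inferInstance : Mono (biprod.inl : P₀ ⟶ P₀ ⊞ P₁)), hmono,
      kernel.condition _, kernel.condition _, ?_, ?_⟩
    · exact ShortComplex.ShortExact.mk'
        (ShortComplex.exact_of_f_is_kernel _ (kernelIsKernel (g.app 0)))
        (by show Mono (f.app 0); rw [hf0]; exact (inferInstance : Mono (kernel.ι (g.app 0)))) (by assumption)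
    · exact ShortComplex.ShortExact.mk'
        (ShortComplex.exact_of_f_is_kernel _ (kernelIsKernel (g.app 1)))
        (by show Mono (f.app 1); rw [hf1]; exact (inferInstance : Mono (kernel.ι (g.app 1)))) (by assumption)
  obtain ⟨s, hs⟩ := hsplit α' α f g hconf
  have hs0 : s.app 0 ≫ g.app 0 = 𝟙 _ := congr_fun (congrArg NatTrans.app hs) 0
  have hs1 : s.app 1 ≫ g.app 1 = 𝟙 _ := congr_fun (congrArg NatTrans.app hs) 1
  haveI hP₀ : Projective P₀ := inferInstanceAs (Projective (Projective.over (β.obj 0)))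
  haveI hP₁ : Projective P₁ := inferInstanceAs (Projective (Projective.over (β.obj 1)))
  haveI hPP : Projective (P₀ ⊞ P₁) := inferInstance
  haveI : Projective (α.obj 0) := hP₀
  haveI : Projective (α.obj 1) := hPP
  rw [hg0] at hs0
  rw [hg1] at hs1
  constructor
  · constructor
    intro E X h e he
    refine ⟨s.app 0 ≫ Projective.factorThru (p ≫ h) e, ?_⟩
    rw [Category.assoc, Projective.factorThru_comp]
    exact (Category.assoc _ _ _).symm.trans ((hs0 =≫ h).trans (Category.id_comp _))
  · constructor
    intro E X h e he
    refine ⟨s.app 1 ≫ Projective.factorThru (g1 ≫ h) e, ?_⟩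
    rw [Category.assoc, Projective.factorThru_comp]
    exact (Category.assoc _ _ _).symm.trans ((hs1 =≫ h).trans (Category.id_comp _))

noncomputable section MonTSec

/-- The object `i₁(T) ⊕ i₂(T)` of `Mon(𝒜)`. -/
abbrev monT (T : 𝒜) : Fin 2 ⥤ 𝒜 := mk₁ (biprod.inr : T ⟶ T ⊞ T)

section Entries
variable {T S : 𝒜}

lemma monT_obj1 : (monT S).obj 1 = (S ⊞ S) := rfl
lemma aux_inr_fst {X Y : 𝒜} (f : X ⟶ Y) : (f ≫ biprod.inr) ≫ (biprod.fst : Y ⊞ Y ⟶ Y) = 0 := by simp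
lemma monT_obj0 : (monT S).obj 0 = S := rfl

def ent0 (φ : monT T ⟶ monT S) : T ⟶ S := φ.app 0
def enta (φ : monT T ⟶ monT S) : T ⟶ S := biprod.inl ≫ φ.app 1 ≫ biprod.fst
def entb (φ : monT T ⟶ monT S) : T ⟶ S := biprod.inl ≫ φ.app 1 ≫ biprod.snd

lemma inr_app1 (φ : monT T ⟶ monT S) :
    biprod.inr ≫ φ.app 1 = ent0 φ ≫ biprod.inr := natSq φ

lemma app1_eq (φ : monT T ⟶ monT S) :
    φ.app 1 = biprod.desc (biprod.lift (enta φ) (entb φ)) (ent0 φ ≫ biprod.inr) := by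
  refine biprod.hom_ext' _ _ (biprod.hom_ext _ _ ?_ ?_) (biprod.hom_ext _ _ ?_ ?_)
  all_goals dsimp only [monT_obj1, monT_obj0]
  · simp [enta]; exact Category.assoc _ _ _
  · simp [entb]; exact Category.assoc _ _ _
  · exact ((inr_app1 φ) =≫ biprod.fst).trans ((aux_inr_fst _).trans (by simp : (biprod.inr ≫ biprod.desc (biprod.lift (enta φ) (entb φ)) (ent0 φ ≫ biprod.inr)) ≫ (biprod.fst : S ⊞ S ⟶ S) = 0).symm)
  · exact ((inr_app1 φ) =≫ biprod.snd).trans (by simp [ent0]; rfl)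

/-- Builder for morphisms `monT T ⟶ monT S` from the three entries. -/
def mkφ (x a b : T ⟶ S) : monT T ⟶ monT S :=
  homMk₁ (F := (monT T : ComposableArrows 𝒜 1)) (G := (monT S : ComposableArrows 𝒜 1))
    x (biprod.desc (biprod.lift a b) (x ≫ biprod.inr)) (biprod.inr_desc _ _)

@[simp] lemma mkφ_app0 (x a b : T ⟶ S) : (mkφ x a b).app 0 = x := rfl
@[simp] lemma mkφ_app1 (x a b : T ⟶ S) :
    (mkφ x a b).app 1 = biprod.desc (biprod.lift a b) (x ≫ biprod.inr) := rfl
@[simp] lemma ent0_mkφ (x a b : T ⟶ S) : ent0 (mkφ x a b) = x := rfl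
@[simp] lemma enta_mkφ (x a b : T ⟶ S) : enta (mkφ x a b) = a := by
  dsimp only [enta, monT_obj1, monT_obj0]; simp
@[simp] lemma entb_mkφ (x a b : T ⟶ S) : entb (mkφ x a b) = b := by
  dsimp only [entb, monT_obj1, monT_obj0]; simp

lemma mkφ_ext (φ : monT T ⟶ monT S) : φ = mkφ (ent0 φ) (enta φ) (entb φ) := by
  apply ComposableArrows.hom_ext₁
  · rfl
  · exact app1_eq φ

/-- Factorization through a projective object of `Mon(𝒜)` from factorizations
of the three entries through projectives of `𝒜`. -/
lemma fact {T S : 𝒜} (φ : monT T ⟶ monT S)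
    (h0 : ∃ (P : 𝒜) (u : T ⟶ P) (v : P ⟶ S), Projective P ∧ u ≫ v = ent0 φ)
    (ha : ∃ (P : 𝒜) (u : T ⟶ P) (v : P ⟶ S), Projective P ∧ u ≫ v = enta φ)
    (hb : ∃ (P : 𝒜) (u : T ⟶ P) (v : P ⟶ S), Projective P ∧ u ≫ v = entb φ) :
    ∃ (γ : Fin 2 ⥤ 𝒜) (u : monT T ⟶ γ) (v : γ ⟶ monT S),
      MonProjective γ ∧ u ≫ v = φ := by
  obtain ⟨P, u1, v1, hP, ea⟩ := ha
  obtain ⟨Q, u2, v2, hQ, eb⟩ := hb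
  obtain ⟨R, u3, v3, hR, e0⟩ := h0
  haveI := hP; haveI := hQ; haveI := hR
  haveI : Projective (P ⊞ Q) := inferInstance
  refine ⟨mk₁ (biprod.inr : R ⟶ (P ⊞ Q) ⊞ R), ?_, ?_, monProjective_mk inferInstance hR, ?_⟩
  · exact homMk₁ (F := (monT T : ComposableArrows 𝒜 1))
      (G := ((mk₁ (biprod.inr : R ⟶ (P ⊞ Q) ⊞ R)) : ComposableArrows 𝒜 1))
      u3 (biprod.desc (biprod.lift u1 u2 ≫ biprod.inl) (u3 ≫ biprod.inr))
      (biprod.inr_desc _ _)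
  · exact homMk₁ (F := ((mk₁ (biprod.inr : R ⟶ (P ⊞ Q) ⊞ R)) : ComposableArrows 𝒜 1))
      (G := (monT S : ComposableArrows 𝒜 1))
      v3 (biprod.desc (biprod.desc (v1 ≫ biprod.inl) (v2 ≫ biprod.inr)) (v3 ≫ biprod.inr))
      (biprod.inr_desc _ _)
  · apply ComposableArrows.hom_ext₁
    · exact e0
    · show (biprod.desc (biprod.lift u1 u2 ≫ biprod.inl) (u3 ≫ biprod.inr)) ≫
        (biprod.desc (biprod.desc (v1 ≫ biprod.inl) (v2 ≫ biprod.inr)) (v3 ≫ biprod.inr)) =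
        φ.app 1
      rw [app1_eq φ]
      ext
      · simp [← ea]
      · simp [← eb]
      · simp [← e0]
      · simp [← e0]

end Entries
end MonTSec

noncomputable section RingSec
open ZeroObject
variable {𝒜 : Type u} [Category.{v} 𝒜] [Abelian 𝒜]

lemma stableRel_iff {T : 𝒜} {f g : End T} : stableRel T f g ↔
    ∃ (P : 𝒜) (u : T ⟶ P) (v : P ⟶ T), Projective P ∧ f - g = u ≫ v := by
  constructor
  · rintro ⟨P, u, v, hP, e⟩; exact ⟨P, u, v, hP, sub_eq_iff_eq_add'.2 e⟩
  · rintro ⟨P, u, v, hP, d⟩; exact ⟨P, u, v, hP, sub_eq_iff_eq_add'.1 d⟩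

lemma monStableRel_iff {β : Fin 2 ⥤ 𝒜} {f g : End β} : monStableRel β f g ↔
    ∃ (γ : Fin 2 ⥤ 𝒜) (u : β ⟶ γ) (v : γ ⟶ β), MonProjective γ ∧ f - g = u ≫ v := by
  constructor
  · rintro ⟨γ, u, v, hγ, e⟩; exact ⟨γ, u, v, hγ, sub_eq_iff_eq_add'.2 e⟩
  · rintro ⟨γ, u, v, hγ, d⟩; exact ⟨γ, u, v, hγ, sub_eq_iff_eq_add'.1 d⟩

lemma stableRel_refl (T : 𝒜) (f : End T) : stableRel T f f :=
  stableRel_iff.2 ⟨0, 0, 0, inferInstance, by simp⟩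

lemma stableRel_symm {T : 𝒜} {f g : End T} (h : stableRel T f g) : stableRel T g f := by
  obtain ⟨P, u, v, hP, e⟩ := stableRel_iff.1 h
  refine stableRel_iff.2 ⟨P, u, -v, hP, ?_⟩
  rw [Preadditive.comp_neg, ← e]
  abel

lemma stableRel_trans {T : 𝒜} {f g h : End T} (h1 : stableRel T f g) (h2 : stableRel T g h) :
    stableRel T f h := by
  obtain ⟨P, u, v, hP, e1⟩ := stableRel_iff.1 h1
  obtain ⟨Q, u', v', hQ, e2⟩ := stableRel_iff.1 h2
  haveI := hP; haveI := hQ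
  refine stableRel_iff.2 ⟨P ⊞ Q, biprod.lift u u', biprod.desc v v', inferInstance, ?_⟩
  rw [biprod.lift_desc, ← e1, ← e2]
  abel

lemma stableRel_of_rel {T : 𝒜} {f g : End T} (h : RingQuot.Rel (stableRel T) f g) :
    stableRel T f g := by
  induction h with
  | of h => exact h
  | @add_left a b c h ih =>
      obtain ⟨P, u, v, hP, e⟩ := stableRel_iff.1 ih
      exact stableRel_iff.2 ⟨P, u, v, hP, by rw [← e]; abel⟩
  | @mul_left a b c h ih =>
      obtain ⟨P, u, v, hP, e⟩ := stableRel_iff.1 ih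
      refine stableRel_iff.2 ⟨P, c ≫ u, v, hP, ?_⟩
      have : a * c - b * c = c ≫ (a - b) := by
        rw [End.mul_def, End.mul_def, Preadditive.comp_sub]
      rw [this, e, Category.assoc]
  | @mul_right a b c h ih =>
      obtain ⟨P, u, v, hP, e⟩ := stableRel_iff.1 ih
      refine stableRel_iff.2 ⟨P, u, v ≫ a, hP, ?_⟩
      have : a * b - a * c = (b - c) ≫ a := by
        rw [End.mul_def, End.mul_def, Preadditive.sub_comp]
      rw [this, e, Category.assoc]

lemma stableRel_of_mk_eq {T : 𝒜} {f g : End T}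
    (h : RingQuot.mkRingHom (stableRel T) f = RingQuot.mkRingHom (stableRel T) g) :
    stableRel T f g := by
  simp only [RingQuot.mkRingHom_def, RingHom.coe_mk, MonoidHom.coe_mk, OneHom.coe_mk] at h
  have h' := congrArg RingQuot.toQuot h
  have he := Quot.eqvGen_exact h'
  clear h h'
  induction he with
  | rel _ _ h => exact stableRel_of_rel h
  | refl => exact stableRel_refl _ _
  | symm _ _ _ ih => exact stableRel_symm ih
  | trans _ _ _ _ _ ih1 ih2 => exact stableRel_trans ih1 ih2

end RingSec

noncomputable section MainSec
variable {𝒜 : Type u} [Category.{v} 𝒜] [Abelian 𝒜]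

lemma mem_T2 {Λ : Type*} [Ring Λ] {M : Matrix (Fin 2) (Fin 2) Λ} (h : M 1 0 = 0) :
    M ∈ T2 Λ := h

lemma mat2_ext {Λ : Type*} [Ring Λ] {M N : Matrix (Fin 2) (Fin 2) Λ}
    (h00 : M 0 0 = N 0 0) (h01 : M 0 1 = N 0 1)
    (h10 : M 1 0 = N 1 0) (h11 : M 1 1 = N 1 1) : M = N := by
  ext i j
  fin_cases i <;> fin_cases j <;> assumption

section Entries2
variable {T S W : 𝒜}

lemma mkφ_comp (x a b : T ⟶ S) (x' a' b' : S ⟶ W) :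
    mkφ x a b ≫ mkφ x' a' b' = mkφ (x ≫ x') (a ≫ a') (a ≫ b' + b ≫ x') := by
  apply ComposableArrows.hom_ext₁
  · rfl
  · show (mkφ x a b).app 1 ≫ (mkφ x' a' b').app 1 = (mkφ (x ≫ x') (a ≫ a') (a ≫ b' + b ≫ x')).app 1
    rw [mkφ_app1, mkφ_app1, mkφ_app1]
    dsimp only [monT_obj1, monT_obj0]
    refine biprod.hom_ext' _ _ (biprod.hom_ext _ _ ?_ ?_) (biprod.hom_ext _ _ ?_ ?_) <;>
      simp [biprod.lift_desc]

lemma mkφ_add (x a b x' a' b' : T ⟶ S) :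
    mkφ x a b + mkφ x' a' b' = mkφ (x + x') (a + a') (b + b') := by
  apply ComposableArrows.hom_ext₁
  · show (mkφ x a b).app 0 + (mkφ x' a' b').app 0 = (mkφ (x + x') (a + a') (b + b')).app 0
    rw [mkφ_app0, mkφ_app0, mkφ_app0]
    rfl
  · show (mkφ x a b).app 1 + (mkφ x' a' b').app 1 = (mkφ (x + x') (a + a') (b + b')).app 1
    rw [mkφ_app1, mkφ_app1, mkφ_app1]
    change (biprod.desc (biprod.lift a b) (x ≫ biprod.inr) + biprod.desc (biprod.lift a' b') (x' ≫ biprod.inr) : T ⊞ T ⟶ S ⊞ S) =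
      biprod.desc (biprod.lift (a + a') (b + b')) ((x + x') ≫ biprod.inr)
    refine biprod.hom_ext' _ _ (biprod.hom_ext _ _ ?_ ?_) (biprod.hom_ext _ _ ?_ ?_) <;>
      simp [Preadditive.add_comp, Preadditive.comp_add]

end Entries2

section Main
variable (T : 𝒜)

def qh : End T →+* StableEnd T := RingQuot.mkRingHom (stableRel T)

def toMat (e : End (monT T)) : Matrix (Fin 2) (Fin 2) (StableEnd T) :=
  ![![qh T (ent0 e), qh T (entb e)], ![0, qh T (enta e)]]

lemma toMat_lower (e : End (monT T)) : toMat T e 1 0 = 0 := by simp [toMat]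

lemma one_eq_mkφ : (1 : End (monT T)) = mkφ (𝟙 T) (𝟙 T) 0 := by
  apply ComposableArrows.hom_ext₁
  · rfl
  · show 𝟙 (T ⊞ T) = (mkφ (𝟙 T) (𝟙 T) 0).app 1
    rw [mkφ_app1]
    refine biprod.hom_ext' _ _ (biprod.hom_ext _ _ ?_ ?_) (biprod.hom_ext _ _ ?_ ?_) <;> simp

lemma qh_mul (x y : End T) : qh T (x ≫ y : End T) = qh T y * qh T x := by
  rw [← End.mul_def, map_mul]

def Ψ : End (monT T) →+* T2 (StableEnd T) where
  toFun e := ⟨toMat T e, mem_T2 (toMat_lower T e)⟩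
  map_one' := by
    apply Subtype.ext
    show toMat T 1 = (1 : Matrix (Fin 2) (Fin 2) (StableEnd T))
    rw [one_eq_mkφ]
    refine mat2_ext ?_ ?_ ?_ ?_ <;>
      simp [toMat, Matrix.one_apply, qh, ← End.one_def]
    · exact map_one _
    · exact map_zero _
    · exact map_one _
  map_mul' := by
    intro e e'
    obtain ⟨x, a, b, he⟩ : ∃ x a b, e = mkφ x a b := ⟨_, _, _, mkφ_ext e⟩
    obtain ⟨x', a', b', he'⟩ : ∃ x a b, e' = mkφ x a b := ⟨_, _, _, mkφ_ext e'⟩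
    apply Subtype.ext
    show toMat T (e * e') = (toMat T e) * (toMat T e')
    have : e * e' = e' ≫ e := rfl
    rw [this, he, he', mkφ_comp]
    refine mat2_ext ?_ ?_ ?_ ?_ <;>
      · simp only [Matrix.mul_apply, Fin.sum_univ_two]
        simp [toMat, Matrix.mul_apply, Fin.sum_univ_two, qh_mul, map_add]
        try abel
  map_zero' := by
    apply Subtype.ext
    show toMat T 0 = (0 : Matrix (Fin 2) (Fin 2) (StableEnd T))
    have : (0 : End (monT T)) = mkφ 0 0 0 := by
      apply ComposableArrows.hom_ext₁
      · rfl
      · show (0 : (monT T).obj 1 ⟶ (monT T).obj 1) = (mkφ (0 : T ⟶ T) 0 0).app 1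
        rw [mkφ_app1]
        change (0 : T ⊞ T ⟶ T ⊞ T) = biprod.desc (biprod.lift 0 0) ((0 : T ⟶ T) ≫ biprod.inr)
        refine biprod.hom_ext' _ _ (biprod.hom_ext _ _ ?_ ?_) (biprod.hom_ext _ _ ?_ ?_) <;> simp
    rw [this]
    refine mat2_ext ?_ ?_ ?_ ?_ <;> simp [toMat, qh]
    · exact map_zero _
    · exact map_zero _
    · exact map_zero _
  map_add' := by
    intro e e'
    obtain ⟨x, a, b, he⟩ : ∃ x a b, e = mkφ x a b := ⟨_, _, _, mkφ_ext e⟩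
    obtain ⟨x', a', b', he'⟩ : ∃ x a b, e' = mkφ x a b := ⟨_, _, _, mkφ_ext e'⟩
    apply Subtype.ext
    show toMat T (e + e') = (toMat T e) + (toMat T e')
    rw [he, he', mkφ_add]
    refine mat2_ext ?_ ?_ ?_ ?_ <;>
      (simp only [Matrix.add_apply]; simp [toMat, Matrix.add_apply, map_add])
end Main
end MainSec

noncomputable section FinalSec
variable {𝒜 : Type u} [Category.{v} 𝒜] [Abelian 𝒜]

lemma ent0_sub {T S : 𝒜} (φ ψ : monT T ⟶ monT S) : ent0 (φ - ψ) = ent0 φ - ent0 ψ := by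
  simp [ent0]
  rfl

lemma enta_sub {T S : 𝒜} (φ ψ : monT T ⟶ monT S) : enta (φ - ψ) = enta φ - enta ψ := by
  simp [enta, Preadditive.comp_sub, Preadditive.sub_comp]
  exact (biprod.inl ≫= Preadditive.sub_comp _ _ _).trans (Preadditive.comp_sub _ _ _)

lemma entb_sub {T S : 𝒜} (φ ψ : monT T ⟶ monT S) : entb (φ - ψ) = entb φ - entb ψ := by
  simp [entb, Preadditive.comp_sub, Preadditive.sub_comp]
  exact (biprod.inl ≫= Preadditive.sub_comp _ _ _).trans (Preadditive.comp_sub _ _ _)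

variable (T : 𝒜) [EnoughProjectives 𝒜]

lemma psi_respect {e e' : End (monT T)} (h : monStableRel (monT T) e e') :
    Ψ T e = Ψ T e' := by
  obtain ⟨γ, u, v, hγ, d⟩ := monStableRel_iff.1 h
  obtain ⟨hp0, hp1⟩ := monProjective_components γ hγ
  have r0 : stableRel T (ent0 e) (ent0 e') := by
    refine stableRel_iff.2 ⟨γ.obj 0, u.app 0, v.app 0, hp0, ?_⟩
    rw [← ent0_sub, d]
    rfl
  have ra : stableRel T (enta e) (enta e') := by
    refine stableRel_iff.2 ⟨γ.obj 1, biprod.inl ≫ u.app 1, v.app 1 ≫ biprod.fst, hp1, ?_⟩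
    rw [← enta_sub, d]
    simp [enta]
    exact (biprod.inl ≫= Category.assoc _ _ _).trans (Category.assoc _ _ _).symm
  have rb : stableRel T (entb e) (entb e') := by
    refine stableRel_iff.2 ⟨γ.obj 1, biprod.inl ≫ u.app 1, v.app 1 ≫ biprod.snd, hp1, ?_⟩
    rw [← entb_sub, d]
    simp [entb]
    exact (biprod.inl ≫= Category.assoc _ _ _).trans (Category.assoc _ _ _).symm
  apply Subtype.ext
  show toMat T e = toMat T e'
  refine mat2_ext ?_ ?_ ?_ ?_
  · simp only [toMat, qh]
    norm_num
    exact RingQuot.mkRingHom_rel r0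
  · simp only [toMat, qh]
    norm_num
    exact RingQuot.mkRingHom_rel rb
  · rfl
  · simp only [toMat, qh]
    norm_num
    exact RingQuot.mkRingHom_rel ra

def Φ : MonStableEnd (monT T) →+* T2 (StableEnd T) :=
  RingQuot.lift ⟨Ψ T, fun _ _ h => psi_respect T h⟩

lemma phi_mk (e : End (monT T)) :
    Φ T (RingQuot.mkRingHom (monStableRel (monT T)) e) = Ψ T e :=
  RingQuot.lift_mkRingHom_apply _ _ _

lemma phi_surjective : Function.Surjective (Φ T) := by
  intro M
  obtain ⟨c00, h00⟩ := RingQuot.mkRingHom_surjective (stableRel T) ((M : Matrix (Fin 2) (Fin 2) (StableEnd T)) 0 0)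
  obtain ⟨c01, h01⟩ := RingQuot.mkRingHom_surjective (stableRel T) ((M : Matrix (Fin 2) (Fin 2) (StableEnd T)) 0 1)
  obtain ⟨c11, h11⟩ := RingQuot.mkRingHom_surjective (stableRel T) ((M : Matrix (Fin 2) (Fin 2) (StableEnd T)) 1 1)
  refine ⟨RingQuot.mkRingHom _ (mkφ c00 c11 c01), ?_⟩
  rw [phi_mk]
  apply Subtype.ext
  show toMat T (mkφ c00 c11 c01) = (M : Matrix (Fin 2) (Fin 2) (StableEnd T))
  refine mat2_ext ?_ ?_ ?_ ?_
  · exact h00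
  · rw [← h01]; simp [toMat, qh]; rfl
  · have hM : (M : Matrix (Fin 2) (Fin 2) (StableEnd T)) 1 0 = 0 := M.2
    simp [toMat, hM]
  · rw [← h11]; simp [toMat, qh]; rfl

lemma phi_injective : Function.Injective (Φ T) := by
  intro X Y h
  obtain ⟨e, rfl⟩ := RingQuot.mkRingHom_surjective _ X
  obtain ⟨e', rfl⟩ := RingQuot.mkRingHom_surjective _ Y
  rw [phi_mk, phi_mk] at h
  have hm : toMat T e = toMat T e' := congrArg Subtype.val h
  have h00 : RingQuot.mkRingHom (stableRel T) (ent0 e) = RingQuot.mkRingHom (stableRel T) (ent0 e') := by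
    have := congrFun (congrFun hm 0) 0; simp [toMat, qh] at this; exact this
  have h01 : RingQuot.mkRingHom (stableRel T) (entb e) = RingQuot.mkRingHom (stableRel T) (entb e') := by
    have := congrFun (congrFun hm 0) 1; simp [toMat, qh] at this; exact this
  have h11 : RingQuot.mkRingHom (stableRel T) (enta e) = RingQuot.mkRingHom (stableRel T) (enta e') := by
    have := congrFun (congrFun hm 1) 1; simp [toMat, qh] at this; exact this
  obtain ⟨P0, u0, v0, hP0, d0⟩ := stableRel_iff.1 (stableRel_of_mk_eq h00)
  obtain ⟨Pa, ua, va, hPa, da⟩ := stableRel_iff.1 (stableRel_of_mk_eq h11)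
  obtain ⟨Pb, ub, vb, hPb, db⟩ := stableRel_iff.1 (stableRel_of_mk_eq h01)
  obtain ⟨γ, uu, vv, hγ, hf⟩ := fact (e - e')
    ⟨P0, u0, v0, hP0, by rw [ent0_sub]; exact d0.symm⟩
    ⟨Pa, ua, va, hPa, by rw [enta_sub]; exact da.symm⟩
    ⟨Pb, ub, vb, hPb, by rw [entb_sub]; exact db.symm⟩
  exact RingQuot.mkRingHom_rel (monStableRel_iff.2 ⟨γ, uu, vv, hγ, hf.symm⟩)

end FinalSec
/-- Let `𝒜` be a Frobenius abelian category and `T` an object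
whose shifts `T[n]` in the stable category `𝒜̲` are represented by objects
`Tn n` (with `Tn 0 ≅ T`), such that `Hom_{𝒜̲}(T, T[n]) = 0` for `n ≠ 0`, i.e.
every morphism `T ⟶ Tn n` factors through a projective object. Then
`T' = i₁(T) ⊕ i₂(T)` (the object of `Mon(𝒜)` given by the arrow
`biprod.inr : T ⟶ T ⊞ T`) satisfies `Hom(T', T'[n]) = 0` for `n ≠ 0` in the
stable monomorphism category — every morphism
`T' ⟶ i₁(Tn n) ⊕ i₂(Tn n)` factors through a projective object of `Mon(𝒜)` —
and the stable endomorphism ring of `T'` is isomorphic, as a ring, to the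
`2 × 2` upper triangular matrix algebra `T₂(End_{𝒜̲}(T))`. -/
theorem stmt19 [EnoughProjectives 𝒜] [EnoughInjectives 𝒜]
    (hfrob : ∀ X : 𝒜, Projective X ↔ Injective X)
    (T : 𝒜) (Tn : ℤ → 𝒜) (h0 : Nonempty (Tn 0 ≅ T))
    (hvanish : ∀ n : ℤ, n ≠ 0 → ∀ f : T ⟶ Tn n,
      ∃ (P : 𝒜) (u : T ⟶ P) (v : P ⟶ Tn n), Projective P ∧ u ≫ v = f) :
    (∀ n : ℤ, n ≠ 0 →
      ∀ φ : (ComposableArrows.mk₁ (biprod.inr : T ⟶ T ⊞ T) : Fin 2 ⥤ 𝒜) ⟶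
          (ComposableArrows.mk₁ (biprod.inr : Tn n ⟶ Tn n ⊞ Tn n) : Fin 2 ⥤ 𝒜),
        ∃ (γ : Fin 2 ⥤ 𝒜)
          (u : (ComposableArrows.mk₁ (biprod.inr : T ⟶ T ⊞ T) : Fin 2 ⥤ 𝒜) ⟶ γ)
          (v : γ ⟶ (ComposableArrows.mk₁
            (biprod.inr : Tn n ⟶ Tn n ⊞ Tn n) : Fin 2 ⥤ 𝒜)),
          MonProjective γ ∧ u ≫ v = φ) ∧
    Nonempty (MonStableEnd
      (ComposableArrows.mk₁ (biprod.inr : T ⟶ T ⊞ T) : Fin 2 ⥤ 𝒜) ≃+*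
        T2 (StableEnd T)) := by
  constructor
  · intro n hn φ
    exact fact φ (hvanish n hn (ent0 φ)) (hvanish n hn (enta φ)) (hvanish n hn (entb φ))
  · exact ⟨RingEquiv.ofBijective (Φ T) ⟨phi_injective T, phi_surjective T⟩⟩
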